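/- arXiv:1509.00916 — 2 statements merged into one kernel-verified Lean document; each statement's English description precedes it below -/
import Mathlib

section
/- Let H be a finite simple graph with vertex set {1,…,N} and let C be a set of l ≥ 1 distinct edges of H. Then there exist two vertices u and w of H such that the number of edges in C incident to u or to w is at least ⌈2l − 1 − cost(C)⌉. -/
open SimpleGraph Finset

/-- For a graph on vertex set `Fin N`, the edge `e = {i, j}` is identified with the
point `x_e = b_i + b_j` in `ℝ^N`, where `b_i` is the `i`-th standard basis vector. -/
noncomputable def edgePoint (N : ℕ) (e : Sym2 (Fin N)) : EuclideanSpace ℝ (Fin N) :=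
  Sym2.lift ⟨fun i j => EuclideanSpace.single i (1 : ℝ) + EuclideanSpace.single j (1 : ℝ),
    fun _ _ => add_comm _ _⟩ e

/-- The (k-means) cost of a finite set `C` of edges:
`cost(C) = inf_{c ∈ ℝ^N} Σ_{e ∈ C} ‖x_e − c‖²`. -/
noncomputable def cost (N : ℕ) (C : Finset (Sym2 (Fin N))) : ℝ :=
  ⨅ c : EuclideanSpace ℝ (Fin N), ∑ e ∈ C, ‖edgePoint N e - c‖ ^ 2

/-! With `d = ∑ x_e` the degree vector of `C`, the centroid `d / l` shows
`cost(C) = 2l - ‖d‖² / l`. Expanding `‖d‖² = ∑_e ⟪x_e, d⟫` with `⟪x_{uw}, d⟫ = deg u + deg w`,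
some edge `uw` of `C` has `deg u + deg w ≥ ‖d‖² / l ≥ 2l - cost(C)`, and at most one edge of `C`
is counted in both `deg u` and `deg w`. -/

/-- The left side is the value of the right side at the centroid `(∑ i ∈ s, x i) / #s`. -/
theorem sum_norm_sq_sub_norm_sum_sq_div_card_le {ι E : Type*} [NormedAddCommGroup E]
    [InnerProductSpace ℝ E] (s : Finset ι) (x : ι → E) (c : E) :
    ∑ i ∈ s, ‖x i‖ ^ 2 - ‖∑ i ∈ s, x i‖ ^ 2 / #s ≤ ∑ i ∈ s, ‖x i - c‖ ^ 2 := by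
  rcases s.eq_empty_or_nonempty with rfl | hs
  · simp
  set n : ℝ := (#s : ℝ)
  set d := ∑ i ∈ s, x i
  have hn : 0 < n := by simp [n, hs.card_pos]
  have hexpand : ∑ i ∈ s, ‖x i - c‖ ^ 2 = ∑ i ∈ s, ‖x i‖ ^ 2 - 2 * inner ℝ d c + n * ‖c‖ ^ 2 := by
    simp only [norm_sub_sq_real, sum_add_distrib, sum_sub_distrib, ← mul_sum, d, sum_inner,
      sum_const, nsmul_eq_mul, n]
  have hsq : 0 ≤ ‖d - n • c‖ ^ 2 := sq_nonneg _
  rw [norm_sub_sq_real, inner_smul_right, norm_smul, Real.norm_of_nonneg hn.le] at hsq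
  have hcentroid : 2 * inner ℝ d c - n * ‖c‖ ^ 2 ≤ ‖d‖ ^ 2 / n := by
    rw [le_div_iff₀ hn]
    nlinarith
  linarith

lemma sum_norm_sq_sub_norm_sum_sq_div_card_le_cost (N : ℕ) (C : Finset (Sym2 (Fin N))) :
    ∑ e ∈ C, ‖edgePoint N e‖ ^ 2 - ‖∑ e ∈ C, edgePoint N e‖ ^ 2 / #C ≤ cost N C :=
  le_ciInf (sum_norm_sq_sub_norm_sum_sq_div_card_le C (edgePoint N))

lemma edgePoint_mk (N : ℕ) (a b : Fin N) :
    edgePoint N s(a, b) = EuclideanSpace.single a (1 : ℝ) + EuclideanSpace.single b 1 := rfl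

lemma inner_edgePoint_mk (N : ℕ) (a b : Fin N) (v : EuclideanSpace ℝ (Fin N)) :
    inner ℝ (edgePoint N s(a, b)) v = v a + v b := by
  simp [edgePoint_mk, inner_add_left, EuclideanSpace.inner_single_left]

lemma edgePoint_apply_of_not_isDiag {N : ℕ} {e : Sym2 (Fin N)} (he : ¬ e.IsDiag) (i : Fin N) :
    edgePoint N e i = if i ∈ e then 1 else 0 := by
  induction e using Sym2.ind with
  | _ a b =>
    have hab : a ≠ b := fun h => he (Sym2.mk_isDiag_iff.mpr h)
    simp only [edgePoint_mk, PiLp.add_apply, PiLp.single_apply, Sym2.mem_iff]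
    by_cases hia : i = a <;> by_cases hib : i = b <;> simp_all

lemma norm_edgePoint_sq_of_not_isDiag {N : ℕ} {e : Sym2 (Fin N)} (he : ¬ e.IsDiag) :
    ‖edgePoint N e‖ ^ 2 = 2 := by
  induction e using Sym2.ind with
  | _ a b =>
    have hab : a ≠ b := fun h => he (Sym2.mk_isDiag_iff.mpr h)
    rw [← real_inner_self_eq_norm_sq, inner_edgePoint_mk, edgePoint_mk]
    simp [hab, Ne.symm hab]
    norm_num

def edgeDeg {V : Type*} [DecidableEq V] (C : Finset (Sym2 V)) (v : V) : ℕ :=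
  #{e ∈ C | v ∈ e}

/-- Two distinct vertices share at most one edge, namely `s(u, w)`. -/
lemma edgeDeg_add_edgeDeg_le {V : Type*} [DecidableEq V] (C : Finset (Sym2 V)) {u w : V}
    (huw : u ≠ w) : edgeDeg C u + edgeDeg C w ≤ #{e ∈ C | u ∈ e ∨ w ∈ e} + 1 := by
  have hboth : #{e ∈ C | u ∈ e ∧ w ∈ e} ≤ 1 := by
    refine card_le_one.mpr fun e he f hf => ?_
    rw [(Sym2.mem_and_mem_iff huw).mp (mem_filter.mp he).2,
      (Sym2.mem_and_mem_iff huw).mp (mem_filter.mp hf).2]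
  have := card_union_add_card_inter {e ∈ C | u ∈ e} {e ∈ C | w ∈ e}
  rw [← filter_or, ← filter_and] at this
  unfold edgeDeg
  omega

lemma sum_edgePoint_apply {N : ℕ} {C : Finset (Sym2 (Fin N))} (hC : ∀ e ∈ C, ¬ e.IsDiag)
    (i : Fin N) : (∑ e ∈ C, edgePoint N e) i = edgeDeg C i := by
  rw [WithLp.ofLp_sum, Finset.sum_apply, edgeDeg, card_filter]
  push_cast
  exact sum_congr rfl fun e he => edgePoint_apply_of_not_isDiag (hC e he) i

lemma exists_ne_norm_sum_edgePoint_sq_le {N : ℕ} {C : Finset (Sym2 (Fin N))}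
    (hC : ∀ e ∈ C, ¬ e.IsDiag) (hne : C.Nonempty) :
    ∃ u w : Fin N, u ≠ w ∧
      ‖∑ e ∈ C, edgePoint N e‖ ^ 2 ≤ #C * ((edgeDeg C u + edgeDeg C w : ℕ) : ℝ) := by
  set d := ∑ e ∈ C, edgePoint N e
  obtain ⟨e₀, he₀, hmax⟩ := exists_max_image C (fun e => inner ℝ (edgePoint N e) d) hne
  induction e₀ using Sym2.ind with
  | _ u w =>
    refine ⟨u, w, fun h => hC _ he₀ (Sym2.mk_isDiag_iff.mpr h), ?_⟩
    have hdeg : inner ℝ (edgePoint N s(u, w)) d = ((edgeDeg C u + edgeDeg C w : ℕ) : ℝ) := by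
      rw [inner_edgePoint_mk, sum_edgePoint_apply hC, sum_edgePoint_apply hC]
      push_cast
      rfl
    calc ‖d‖ ^ 2 = ∑ e ∈ C, inner ℝ (edgePoint N e) d := by
          rw [← real_inner_self_eq_norm_sq, sum_inner]
      _ ≤ ∑ _e ∈ C, inner ℝ (edgePoint N s(u, w)) d := sum_le_sum hmax
      _ = _ := by rw [sum_const, nsmul_eq_mul, hdeg]

/-- For a set `C` of `l ≥ 1` distinct edges of a finite simple graph `H`
on vertex set `{1, …, N}`, there exist two vertices `u` and `w` such that the number
of edges in `C` incident to `u` or to `w` is at least `⌈2l − 1 − cost(C)⌉`. -/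
theorem statement6 {N : ℕ} (H : SimpleGraph (Fin N)) (C : Finset (Sym2 (Fin N)))
    (hC : ↑C ⊆ H.edgeSet) (l : ℕ) (hl : C.card = l) (hl1 : 1 ≤ l) :
    ∃ u w : Fin N,
      ⌈2 * (l : ℝ) - 1 - cost N C⌉ ≤ ((C.filter fun e => u ∈ e ∨ w ∈ e).card : ℤ) := by
  have hdiag : ∀ e ∈ C, ¬ e.IsDiag := fun e he => H.not_isDiag_of_mem_edgeSet (hC he)
  obtain ⟨u, w, huw, hnorm⟩ :=
    exists_ne_norm_sum_edgePoint_sq_le hdiag (card_pos.mp (by omega))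
  refine ⟨u, w, Int.ceil_le.mpr ?_⟩
  have hcost := sum_norm_sq_sub_norm_sum_sq_div_card_le_cost N C
  rw [sum_congr rfl fun e he => norm_edgePoint_sq_of_not_isDiag (hdiag e he), sum_const,
    nsmul_eq_mul, hl] at hcost
  rw [hl] at hnorm
  have hl0 : (0 : ℝ) < l := by exact_mod_cast hl1
  have hcov : ((edgeDeg C u + edgeDeg C w : ℕ) : ℝ) ≤ #{e ∈ C | u ∈ e ∨ w ∈ e} + 1 := by
    exact_mod_cast edgeDeg_add_edgeDeg_le C huw
  have hdeg := (div_le_iff₀ hl0).mpr (hnorm.trans_eq (mul_comm _ _))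
  push_cast
  linarith
end

section
/- Let H be a finite simple graph with vertex set {1,…,N} and let C be a set of l ≥ 1 distinct edges of H. Then cost(C) = l − 1 if and only if C is an l-star or C is a triangle. -/
open SimpleGraph Finset

/-- A star is a set of distinct edges all incident to a common vertex. -/
def IsStar {N : ℕ} (C : Finset (Sym2 (Fin N))) : Prop :=
  ∃ v : Fin N, ∀ e ∈ C, v ∈ e

/-- A triangle is the set of the three edges `{u,v}, {v,w}, {u,w}` on three
distinct vertices `u, v, w`. -/
def IsTriangle {N : ℕ} (C : Finset (Sym2 (Fin N))) : Prop :=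
  ∃ u v w : Fin N, u ≠ v ∧ u ≠ w ∧ v ≠ w ∧ C = {s(u, v), s(v, w), s(u, w)}

/-!
The optimal centre is the centroid, so `cost C = Σ ‖x_e‖² - ‖Σ x_e‖² / l`, and since
`⟪x_e, x_f⟫ = |e ∩ f|` this is `2 l - (1 / l) Σ_{e, f ∈ C} |e ∩ f|`. The row sum `Σ_f |e ∩ f|` is
`2` plus the number of other edges meeting `e`, hence at most `l + 1`; so `cost C = l - 1` exactly
when any two edges of `C` share a vertex. Such a family is a star or a triangle: if no endpoint of
`ab ∈ C` lies on every edge, then `C` contains edges `bc` and `ac`, and an edge meeting all three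
sides of the triangle `abc` is one of them.
-/

section Centroid

variable {ι E : Type*} [NormedAddCommGroup E] [InnerProductSpace ℝ E]

theorem sum_norm_sub_sq_eq (s : Finset ι) (x : ι → E) (c : E) :
    ∑ i ∈ s, ‖x i - c‖ ^ 2 = (∑ i ∈ s, ‖x i‖ ^ 2 - ‖∑ i ∈ s, x i‖ ^ 2 / #s)
      + #s * ‖c - (#s : ℝ)⁻¹ • ∑ i ∈ s, x i‖ ^ 2 := by
  rcases s.eq_empty_or_nonempty with rfl | hs
  · simp
  have hn : (#s : ℝ) ≠ 0 := by exact_mod_cast hs.card_pos.ne'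
  simp only [norm_sub_sq_real, Finset.sum_add_distrib, Finset.sum_sub_distrib, ← Finset.mul_sum,
    Finset.sum_const, nsmul_eq_mul, real_inner_smul_right, norm_smul, mul_pow,
    Real.norm_eq_abs, sq_abs, inv_pow, real_inner_comm c, inner_sum]
  field_simp
  ring

theorem iInf_sum_norm_sub_sq (s : Finset ι) (x : ι → E) :
    ⨅ c : E, ∑ i ∈ s, ‖x i - c‖ ^ 2 = ∑ i ∈ s, ‖x i‖ ^ 2 - ‖∑ i ∈ s, x i‖ ^ 2 / #s := by
  refine le_antisymm ?_ (le_ciInf fun c => ?_)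
  · refine (ciInf_le ⟨0, ?_⟩ ((#s : ℝ)⁻¹ • ∑ i ∈ s, x i)).trans_eq ?_
    · rintro _ ⟨c, rfl⟩
      positivity
    · simp [sum_norm_sub_sq_eq s x]
  · rw [sum_norm_sub_sq_eq s x c]
    exact le_add_of_nonneg_right (by positivity)

end Centroid

section EdgePoint

variable {N : ℕ}

theorem edgePoint_apply {e : Sym2 (Fin N)} (he : ¬e.IsDiag) (v : Fin N) :
    edgePoint N e v = if v ∈ e then 1 else 0 := by
  induction e using Sym2.ind with
  | _ i j =>
    rw [Sym2.mk_isDiag_iff] at he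
    simp only [edgePoint, Sym2.lift_mk, PiLp.add_apply, PiLp.single_apply, Sym2.mem_iff]
    by_cases hi : v = i <;> by_cases hj : v = j <;> simp_all

theorem inner_edgePoint {e f : Sym2 (Fin N)} (he : ¬e.IsDiag) (hf : ¬f.IsDiag) :
    inner ℝ (edgePoint N e) (edgePoint N f) = #(e.toFinset ∩ f.toFinset) := by
  simp only [PiLp.inner_apply, edgePoint_apply he, edgePoint_apply hf, RCLike.inner_apply,
    conj_trivial, mul_ite, mul_one, mul_zero, ← ite_and]
  rw [Finset.sum_boole]
  congr 2
  ext v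
  simp

theorem cost_eq {C : Finset (Sym2 (Fin N))} (hC : ∀ e ∈ C, ¬e.IsDiag) :
    cost N C = 2 * #C - (∑ e ∈ C, ∑ f ∈ C, #(e.toFinset ∩ f.toFinset) : ℕ) / #C := by
  have hsq : ‖∑ e ∈ C, edgePoint N e‖ ^ 2 = ∑ e ∈ C, ∑ f ∈ C, #(e.toFinset ∩ f.toFinset) := by
    simp_rw [← real_inner_self_eq_norm_sq, sum_inner, inner_sum]
    exact_mod_cast Finset.sum_congr rfl fun e he =>
      Finset.sum_congr rfl fun f hf => inner_edgePoint (hC e he) (hC f hf)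
  have hnorm : ∑ e ∈ C, ‖edgePoint N e‖ ^ 2 = 2 * #C := by
    rw [Finset.sum_congr rfl fun e he => ?_, Finset.sum_const, nsmul_eq_mul, mul_comm]
    rw [← real_inner_self_eq_norm_sq, inner_edgePoint (hC e he) (hC e he), Finset.inter_self,
      Sym2.card_toFinset_of_not_isDiag e (hC e he), Nat.cast_ofNat]
  rw [cost, iInf_sum_norm_sub_sq, hsq, hnorm]

theorem cost_eq_card_sub_one_iff {C : Finset (Sym2 (Fin N))} (hC : ∀ e ∈ C, ¬e.IsDiag)
    (hne : C.Nonempty) :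
    cost N C = #C - 1 ↔ ∑ e ∈ C, ∑ f ∈ C, #(e.toFinset ∩ f.toFinset) = #C * (#C + 1) := by
  have hn : (#C : ℝ) ≠ 0 := by exact_mod_cast hne.card_pos.ne'
  rw [cost_eq hC, ← @Nat.cast_inj ℝ]
  push_cast
  constructor <;> intro h
  · field_simp at h
    linarith
  · rw [h]
    field_simp
    ring

end EdgePoint

namespace Sym2

variable {α : Type*} [DecidableEq α]

theorem card_toFinset_inter_le_one {e f : Sym2 α} (hef : e ≠ f) :
    #(e.toFinset ∩ f.toFinset) ≤ 1 := by
  refine Finset.card_le_one.2 fun x hx y hy => by_contra fun hxy => hef ?_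
  simp only [Finset.mem_inter, mem_toFinset] at hx hy
  exact ((mem_and_mem_iff hxy).1 ⟨hx.1, hy.1⟩).trans ((mem_and_mem_iff hxy).1 ⟨hx.2, hy.2⟩).symm

theorem one_le_card_toFinset_inter_iff {e f : Sym2 α} :
    1 ≤ #(e.toFinset ∩ f.toFinset) ↔ ∃ v, v ∈ e ∧ v ∈ f := by
  simp [Nat.one_le_iff_ne_zero, ← Finset.nonempty_iff_ne_empty, Finset.Nonempty]

variable {C : Finset (Sym2 α)} {e : Sym2 α}

theorem sum_card_toFinset_inter_eq (he : e ∈ C) (hd : ¬e.IsDiag) :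
    ∑ f ∈ C, #(e.toFinset ∩ f.toFinset) = 2 + ∑ f ∈ C.erase e, #(e.toFinset ∩ f.toFinset) := by
  rw [← Finset.add_sum_erase _ _ he, Finset.inter_self, card_toFinset_of_not_isDiag e hd]

theorem sum_card_toFinset_inter_le (he : e ∈ C) (hd : ¬e.IsDiag) :
    ∑ f ∈ C, #(e.toFinset ∩ f.toFinset) ≤ #C + 1 := by
  have hle : ∑ f ∈ C.erase e, #(e.toFinset ∩ f.toFinset) ≤ #(C.erase e) :=
    Finset.sum_le_card_nsmul _ _ 1 (fun f hf =>
      card_toFinset_inter_le_one (Finset.ne_of_mem_erase hf).symm) |>.trans_eq (mul_one _)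
  rw [sum_card_toFinset_inter_eq he hd, ← Finset.card_erase_add_one he]
  omega

theorem sum_card_toFinset_inter_eq_iff (he : e ∈ C) (hd : ¬e.IsDiag) :
    ∑ f ∈ C, #(e.toFinset ∩ f.toFinset) = #C + 1 ↔ ∀ f ∈ C, ∃ v, v ∈ e ∧ v ∈ f := by
  have hcard : ∑ _f ∈ C.erase e, 1 + 1 = #C := by
    rw [Finset.sum_const, smul_eq_mul, mul_one, Finset.card_erase_add_one he]
  rw [sum_card_toFinset_inter_eq he hd, ← hcard, add_comm 2, add_assoc, Nat.add_right_cancel_iff,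
    Finset.sum_eq_sum_iff_of_le fun f hf =>
      card_toFinset_inter_le_one (Finset.ne_of_mem_erase hf).symm]
  refine ⟨fun h f hf => ?_, fun h f hf => ?_⟩
  · by_cases hfe : f = e
    · exact hfe ▸ ⟨f.out.1, out_fst_mem f, out_fst_mem f⟩
    · exact one_le_card_toFinset_inter_iff.1 (h f (Finset.mem_erase.2 ⟨hfe, hf⟩)).ge
  · exact le_antisymm (card_toFinset_inter_le_one (Finset.ne_of_mem_erase hf).symm)
      (one_le_card_toFinset_inter_iff.2 (h f (Finset.mem_of_mem_erase hf)))

theorem sum_sum_card_toFinset_inter_eq_iff (hC : ∀ e ∈ C, ¬e.IsDiag) :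
    ∑ e ∈ C, ∑ f ∈ C, #(e.toFinset ∩ f.toFinset) = #C * (#C + 1) ↔
      ∀ e ∈ C, ∀ f ∈ C, ∃ v, v ∈ e ∧ v ∈ f := by
  rw [← smul_eq_mul, ← Finset.sum_const,
    Finset.sum_eq_sum_iff_of_le fun e he => sum_card_toFinset_inter_le he (hC e he)]
  exact forall₂_congr fun e he => sum_card_toFinset_inter_eq_iff he (hC e he)

theorem mem_triangle_of_meets {a b c : α} (hab : a ≠ b) (hac : a ≠ c) (hbc : b ≠ c)
    {e : Sym2 α} (he : ¬e.IsDiag) (h₁ : ∃ v, v ∈ e ∧ v ∈ s(a, b))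
    (h₂ : ∃ v, v ∈ e ∧ v ∈ s(b, c)) (h₃ : ∃ v, v ∈ e ∧ v ∈ s(a, c)) :
    e ∈ ({s(a, b), s(b, c), s(a, c)} : Finset (Sym2 α)) := by
  induction e using Sym2.ind with
  | _ x y =>
    rw [mk_isDiag_iff] at he
    simp only [mem_iff, Finset.mem_insert, Finset.mem_singleton, eq_iff] at *
    grind

end Sym2

theorem isStar_or_isTriangle_of_pairwise_meet {N : ℕ} {C : Finset (Sym2 (Fin N))}
    (hC : ∀ e ∈ C, ¬e.IsDiag) (hne : C.Nonempty) (h : ∀ e ∈ C, ∀ f ∈ C, ∃ v, v ∈ e ∧ v ∈ f) :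
    IsStar C ∨ IsTriangle C := by
  by_cases hstar : IsStar C
  · exact Or.inl hstar
  simp only [IsStar, not_exists, not_forall, exists_prop] at hstar
  obtain ⟨a, b, he₁⟩ := Sym2.exists.1 hne
  have hab : a ≠ b := Sym2.mk_isDiag_iff.not.1 (hC _ he₁)
  obtain ⟨e₂, he₂, ha₂⟩ := hstar a
  obtain ⟨e₃, he₃, hb₃⟩ := hstar b
  have hb₂ : b ∈ e₂ := by
    obtain ⟨v, hv, hv'⟩ := h _ he₂ _ he₁
    rcases Sym2.mem_iff.1 hv' with rfl | rfl <;> tauto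
  have ha₃ : a ∈ e₃ := by
    obtain ⟨v, hv, hv'⟩ := h _ he₃ _ he₁
    rcases Sym2.mem_iff.1 hv' with rfl | rfl <;> tauto
  obtain ⟨c, rfl⟩ := Sym2.mem_iff_exists.1 hb₂
  obtain ⟨d, rfl⟩ := Sym2.mem_iff_exists.1 ha₃
  have hbc : b ≠ c := Sym2.mk_isDiag_iff.not.1 (hC _ he₂)
  have hac : a ≠ c := fun hac => ha₂ (hac ▸ Sym2.mem_mk_right b a)
  obtain rfl : c = d := by
    obtain ⟨v, hv, hv'⟩ := h _ he₂ _ he₃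
    simp only [Sym2.mem_iff] at hv hv' ha₂ hb₃
    grind
  refine Or.inr ⟨a, b, c, hab, hac, hbc, Finset.Subset.antisymm (fun e he => ?_) ?_⟩
  · exact Sym2.mem_triangle_of_meets hab hac hbc (hC e he) (h e he _ he₁) (h e he _ he₂)
      (h e he _ he₃)
  · simp [Finset.insert_subset_iff, he₁, he₂, he₃]

theorem IsStar.pairwise_meet {N : ℕ} {C : Finset (Sym2 (Fin N))} (h : IsStar C) :
    ∀ e ∈ C, ∀ f ∈ C, ∃ v, v ∈ e ∧ v ∈ f := by
  obtain ⟨v, hv⟩ := h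
  exact fun e he f hf => ⟨v, hv e he, hv f hf⟩

theorem IsTriangle.pairwise_meet {N : ℕ} {C : Finset (Sym2 (Fin N))} (h : IsTriangle C) :
    ∀ e ∈ C, ∀ f ∈ C, ∃ v, v ∈ e ∧ v ∈ f := by
  obtain ⟨u, v, w, -, -, -, rfl⟩ := h
  intro e he f hf
  simp only [Finset.mem_insert, Finset.mem_singleton] at he hf
  rcases he with rfl | rfl | rfl <;> rcases hf with rfl | rfl | rfl <;> simp [Sym2.mem_iff]

/-- For a set `C` of `l ≥ 1` distinct edges of a finite simple graph `H`
on vertex set `{1, …, N}`, `cost(C) = l − 1` if and only if `C` is an `l`-star or a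
triangle. -/
theorem statement7 {N : ℕ} (H : SimpleGraph (Fin N)) (C : Finset (Sym2 (Fin N)))
    (hC : ↑C ⊆ H.edgeSet) (l : ℕ) (hl : C.card = l) (hl1 : 1 ≤ l) :
    cost N C = (l : ℝ) - 1 ↔ (IsStar C ∨ IsTriangle C) := by
  have hd : ∀ e ∈ C, ¬e.IsDiag := fun e he => H.not_isDiag_of_mem_edgeSet (hC he)
  have hne : C.Nonempty := Finset.card_pos.1 (hl ▸ hl1)
  subst hl
  rw [cost_eq_card_sub_one_iff hd hne, Sym2.sum_sum_card_toFinset_inter_eq_iff hd]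
  exact ⟨isStar_or_isTriangle_of_pairwise_meet hd hne,
    fun h => h.elim IsStar.pairwise_meet IsTriangle.pairwise_meet⟩
end
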